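/- Fix reals d > 0, s > 0, ν > 0, σ > 0, a nonzero complex number b, and a positive integer L. For each integer m ≥ 1, let a^{(m)} and ȧ_x^{(m)} be the steering vector and its x-derivative for the square UPA with half-side m, and define CRB_x(m) = (σ²/(4|b|²L))·1/(‖a^{(m)}‖²·‖ȧ_x^{(m)}‖²). Then lim_{m→∞} CRB_x(m) = 0, and likewise with ȧ_y in place of ȧ_x. (Proposition 6, part (22): the x- and y-coordinate CRBs vanish as the number of antennas per dimension n = 2m+1 grows with fixed target distance.) -/

import Mathlib

open Finset Filter

noncomputable section

/-- Distance from antenna `(i,k)` (located at `(i·s, k·s, 0)`) to the boresight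
target at `(0,0,d)`. -/
def rUPA (d s : ℝ) (i k : ℤ) : ℝ :=
  Real.sqrt (d ^ 2 + (i : ℝ) ^ 2 * s ^ 2 + (k : ℝ) ^ 2 * s ^ 2)

/-- Near-field steering vector entry `a_{ik} = (1/(2ν r_{ik}))·exp(−𝕛 ν r_{ik})`. -/
def steer (d s ν : ℝ) (i k : ℤ) : ℂ :=
  ((1 / (2 * ν * rUPA d s i k) : ℝ) : ℂ) *
    Complex.exp (-Complex.I * (ν : ℂ) * ((rUPA d s i k : ℝ) : ℂ))

/-- Entry of the x-derivative `ȧ_x` of the steering vector. -/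
def dax (d s ν : ℝ) (i k : ℤ) : ℂ :=
  steer d s ν i k * (((i : ℝ) * s : ℝ) : ℂ) *
    (((1 / rUPA d s i k ^ 2 : ℝ) : ℂ) + Complex.I * ((ν / rUPA d s i k : ℝ) : ℂ))

/-- Entry of the y-derivative `ȧ_y` of the steering vector. -/
def day (d s ν : ℝ) (i k : ℤ) : ℂ :=
  steer d s ν i k * (((k : ℝ) * s : ℝ) : ℂ) *
    (((1 / rUPA d s i k ^ 2 : ℝ) : ℂ) + Complex.I * ((ν / rUPA d s i k : ℝ) : ℂ))

/-- Entry of the z-derivative `ȧ_z` of the steering vector. -/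
def daz (d s ν : ℝ) (i k : ℤ) : ℂ :=
  -steer d s ν i k * ((d : ℝ) : ℂ) *
    (((1 / rUPA d s i k ^ 2 : ℝ) : ℂ) + Complex.I * ((ν / rUPA d s i k : ℝ) : ℂ))

lemma rUPA_pos {d s : ℝ} (hd : 0 < d) (i k : ℤ) : 0 < rUPA d s i k := by
  apply Real.sqrt_pos.2; positivity

lemma rUPA_sq {d s : ℝ} (hd : 0 < d) (i k : ℤ) :
    rUPA d s i k ^ 2 = d ^ 2 + (i : ℝ) ^ 2 * s ^ 2 + (k : ℝ) ^ 2 * s ^ 2 := by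
  rw [rUPA, Real.sq_sqrt]; positivity

lemma rUPA_comm (d s : ℝ) (i k : ℤ) : rUPA d s k i = rUPA d s i k := by
  rw [rUPA, rUPA]; ring_nf

lemma day_swap (d s ν : ℝ) (i k : ℤ) : day d s ν k i = dax d s ν i k := by
  rw [day, dax, steer, steer, rUPA_comm]

lemma normSq_steer {d s ν : ℝ} (hd : 0 < d) (hν : 0 < ν) (i k : ℤ) :
    Complex.normSq (steer d s ν i k) = 1 / (4 * ν ^ 2 * rUPA d s i k ^ 2) := by
  have hr := rUPA_pos (s := s) hd i k
  rw [steer, Complex.normSq_mul, Complex.normSq_ofReal, ← Complex.sq_norm,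
    Complex.norm_exp]
  have h0 : (-Complex.I * (ν : ℂ) * ((rUPA d s i k : ℝ) : ℂ)).re = 0 := by simp
  rw [h0, Real.exp_zero]
  field_simp
  ring

lemma rUPA_sq_le {d s : ℝ} (hd : 0 < d) (hs : 0 < s) {i k : ℤ}
    (hi : 1 ≤ i) (hk0 : 0 ≤ k) (hki : k ≤ i) :
    rUPA d s i k ^ 2 ≤ (d ^ 2 + 2 * s ^ 2) * (i : ℝ) ^ 2 := by
  rw [rUPA_sq hd]
  have hi1 : (1 : ℝ) ≤ (i : ℝ) := by exact_mod_cast hi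
  have hk0' : (0 : ℝ) ≤ (k : ℝ) := by exact_mod_cast hk0
  have hki' : (k : ℝ) ≤ (i : ℝ) := by exact_mod_cast hki
  have h1 : (1 : ℝ) ≤ (i : ℝ) ^ 2 := by nlinarith
  have h2 : (k : ℝ) ^ 2 ≤ (i : ℝ) ^ 2 := by nlinarith
  nlinarith [mul_nonneg (sq_nonneg d) (sub_nonneg.2 h1),
    mul_nonneg (sq_nonneg s) (sub_nonneg.2 h1),
    mul_nonneg (sq_nonneg s) (sub_nonneg.2 h2)]

lemma steer_bound {d s ν : ℝ} (hd : 0 < d) (hs : 0 < s) (hν : 0 < ν) (i k : ℤ)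
    (hi : 1 ≤ i) (hk0 : 0 ≤ k) (hki : k ≤ i) :
    1 / (4 * ν ^ 2 * (d ^ 2 + 2 * s ^ 2)) / (i : ℝ) ^ 2 ≤
      Complex.normSq (steer d s ν i k) := by
  have hr := rUPA_pos (s := s) hd i k
  have hle := rUPA_sq_le hd hs hi hk0 hki
  have hipos : (0 : ℝ) < (i : ℝ) := by exact_mod_cast hi.trans_lt' (by omega)
  rw [normSq_steer hd hν, div_div]
  apply one_div_le_one_div_of_le (by positivity)
  nlinarith [sq_nonneg (ν : ℝ)]

lemma normSq_dax {d s ν : ℝ} (hd : 0 < d) (hν : 0 < ν) (i k : ℤ) :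
    Complex.normSq (dax d s ν i k) =
      (i : ℝ) ^ 2 * s ^ 2 / (4 * rUPA d s i k ^ 4) +
        (i : ℝ) ^ 2 * s ^ 2 / (4 * ν ^ 2 * rUPA d s i k ^ 6) := by
  have hr := rUPA_pos (s := s) hd i k
  have hfac : ((1 / rUPA d s i k ^ 2 : ℝ) : ℂ) +
      Complex.I * ((ν / rUPA d s i k : ℝ) : ℂ) =
      ((1 / rUPA d s i k ^ 2 : ℝ) : ℂ) + ((ν / rUPA d s i k : ℝ) : ℂ) * Complex.I := by
    ring
  rw [dax, Complex.normSq_mul, Complex.normSq_mul, normSq_steer hd hν,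
    Complex.normSq_ofReal, hfac, Complex.normSq_add_mul_I]
  field_simp
  ring

lemma dax_bound {d s ν : ℝ} (hd : 0 < d) (hs : 0 < s) (hν : 0 < ν) (i k : ℤ)
    (hi : 1 ≤ i) (hk0 : 0 ≤ k) (hki : k ≤ i) :
    s ^ 2 / (4 * (d ^ 2 + 2 * s ^ 2) ^ 2) / (i : ℝ) ^ 2 ≤
      Complex.normSq (dax d s ν i k) := by
  have hr := rUPA_pos (s := s) hd i k
  have hle := rUPA_sq_le hd hs hi hk0 hki
  have hipos : (0 : ℝ) < (i : ℝ) := by exact_mod_cast hi.trans_lt' (by omega)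
  rw [normSq_dax hd hν]
  have h1 : s ^ 2 / (4 * (d ^ 2 + 2 * s ^ 2) ^ 2) / (i : ℝ) ^ 2 ≤
      (i : ℝ) ^ 2 * s ^ 2 / (4 * rUPA d s i k ^ 4) := by
    rw [div_div, div_le_div_iff₀ (by positivity) (by positivity)]
    have h4 : rUPA d s i k ^ 4 ≤ ((d ^ 2 + 2 * s ^ 2) * (i : ℝ) ^ 2) ^ 2 := by
      calc rUPA d s i k ^ 4 = (rUPA d s i k ^ 2) ^ 2 := by ring
        _ ≤ ((d ^ 2 + 2 * s ^ 2) * (i : ℝ) ^ 2) ^ 2 := by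
            apply pow_le_pow_left₀ (by positivity) hle
    nlinarith [sq_nonneg s, sq_nonneg (i : ℝ)]
  have h2 : (0 : ℝ) ≤ (i : ℝ) ^ 2 * s ^ 2 / (4 * ν ^ 2 * rUPA d s i k ^ 6) := by
    positivity
  linarith

lemma Icc_int_eq_map (m : ℕ) :
    Finset.Icc (1 : ℤ) (m : ℤ) =
      (Finset.range m).map ⟨fun j : ℕ => (j : ℤ) + 1, by intro a b h; simpa using h⟩ := by
  ext a
  simp only [Finset.mem_Icc, Finset.mem_map, Finset.mem_range, Function.Embedding.coeFn_mk]
  constructor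
  · rintro ⟨h1, h2⟩
    refine ⟨(a - 1).toNat, by omega, show ((a - 1).toNat : ℤ) + 1 = a by omega⟩
  · rintro ⟨j, hj, rfl⟩
    change 1 ≤ (j : ℤ) + 1 ∧ (j : ℤ) + 1 ≤ m
    omega

lemma harmonic_tendsto (c : ℝ) (hc : 0 < c) :
    Tendsto (fun m : ℕ => ∑ i ∈ Finset.Icc (1 : ℤ) (m : ℤ), c / (i : ℝ)) atTop atTop := by
  have key : ∀ m : ℕ, (∑ i ∈ Finset.Icc (1 : ℤ) (m : ℤ), c / (i : ℝ))
      = c * ∑ j ∈ Finset.range m, 1 / ((j : ℝ) + 1) := by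
    intro m
    rw [Icc_int_eq_map, Finset.sum_map, Finset.mul_sum]
    apply Finset.sum_congr rfl
    intro j _
    show c / (((j : ℤ) + 1 : ℤ) : ℝ) = c * (1 / ((j : ℝ) + 1))
    push_cast
    ring
  simp only [key]
  exact (Real.tendsto_sum_range_one_div_nat_succ_atTop).const_mul_atTop hc

lemma grid_sum_ge (m : ℕ) (f : ℤ → ℤ → ℝ) (hf : ∀ i k, 0 ≤ f i k) (c : ℝ) (hc : 0 ≤ c)
    (h : ∀ i k : ℤ, 1 ≤ i → 0 ≤ k → k ≤ i → c / (i : ℝ) ^ 2 ≤ f i k) :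
    (∑ i ∈ Finset.Icc (1 : ℤ) (m : ℤ), c / (i : ℝ)) ≤
      ∑ i ∈ Finset.Icc (-(m : ℤ)) (m : ℤ), ∑ k ∈ Finset.Icc (-(m : ℤ)) (m : ℤ), f i k := by
  have step1 : ∑ i ∈ Finset.Icc (1 : ℤ) (m : ℤ), ∑ k ∈ Finset.Icc (-(m : ℤ)) (m : ℤ), f i k ≤
      ∑ i ∈ Finset.Icc (-(m : ℤ)) (m : ℤ), ∑ k ∈ Finset.Icc (-(m : ℤ)) (m : ℤ), f i k := by
    apply Finset.sum_le_sum_of_subset_of_nonneg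
    · intro a ha; simp only [Finset.mem_Icc] at *; omega
    · intro a _ _; exact Finset.sum_nonneg fun k _ => hf a k
  refine le_trans ?_ step1
  apply Finset.sum_le_sum
  intro i hi
  simp only [Finset.mem_Icc] at hi
  have hi1 : (1 : ℝ) ≤ (i : ℝ) := by exact_mod_cast hi.1
  have hipos : (0 : ℝ) < (i : ℝ) := by linarith
  have step2 : ∑ k ∈ Finset.Icc (0 : ℤ) i, f i k ≤
      ∑ k ∈ Finset.Icc (-(m : ℤ)) (m : ℤ), f i k := by
    apply Finset.sum_le_sum_of_subset_of_nonneg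
    · intro a ha; simp only [Finset.mem_Icc] at *; omega
    · intro a _ _; exact hf i a
  refine le_trans ?_ step2
  have hcard : (Finset.Icc (0 : ℤ) i).card = (i + 1).toNat := by
    rw [Int.card_Icc]; omega
  have hlow : ∀ k ∈ Finset.Icc (0 : ℤ) i, c / (i : ℝ) ^ 2 ≤ f i k := by
    intro k hk; simp only [Finset.mem_Icc] at hk
    exact h i k hi.1 hk.1 hk.2
  have hmain := Finset.card_nsmul_le_sum (Finset.Icc (0 : ℤ) i) (f i) (c / (i : ℝ) ^ 2) hlow
  rw [hcard, nsmul_eq_mul] at hmain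
  refine le_trans ?_ hmain
  have hcast : ((i + 1).toNat : ℝ) = (i : ℝ) + 1 := by
    have : ((i + 1).toNat : ℤ) = i + 1 := by omega
    exact_mod_cast this
  rw [hcast]
  have e : c / (i : ℝ) = (i : ℝ) * (c / (i : ℝ) ^ 2) := by
    field_simp
  rw [e]
  have hq : 0 ≤ c / (i : ℝ) ^ 2 := by positivity
  nlinarith

/-- Proposition 6, part (22): with `d, s, ν, σ, b, L` fixed, the x- and
y-coordinate CRBs
`CRB_x(m) = (σ²/(4|b|²L))·1/(‖a^{(m)}‖²·‖ȧ_x^{(m)}‖²)` vanish as the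
array half-side `m → ∞`. -/
theorem crb_xy_vanishes_large_array (d s ν σ : ℝ)
    (hd : 0 < d) (hs : 0 < s) (hν : 0 < ν) (hσ : 0 < σ) (b : ℂ) (hb : b ≠ 0)
    (L : ℕ) (hL : 0 < L) :
    Tendsto (fun m : ℕ =>
        (σ ^ 2 / (4 * Complex.normSq b * (L : ℝ))) *
          (1 / ((∑ i ∈ Icc (-(m : ℤ)) m, ∑ k ∈ Icc (-(m : ℤ)) m,
                  Complex.normSq (steer d s ν i k)) *
                (∑ i ∈ Icc (-(m : ℤ)) m, ∑ k ∈ Icc (-(m : ℤ)) m,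
                  Complex.normSq (dax d s ν i k)))))
      atTop (nhds 0) ∧
    Tendsto (fun m : ℕ =>
        (σ ^ 2 / (4 * Complex.normSq b * (L : ℝ))) *
          (1 / ((∑ i ∈ Icc (-(m : ℤ)) m, ∑ k ∈ Icc (-(m : ℤ)) m,
                  Complex.normSq (steer d s ν i k)) *
                (∑ i ∈ Icc (-(m : ℤ)) m, ∑ k ∈ Icc (-(m : ℤ)) m,
                  Complex.normSq (day d s ν i k)))))
      atTop (nhds 0) := by
  have c1pos : 0 < 1 / (4 * ν ^ 2 * (d ^ 2 + 2 * s ^ 2)) := by positivity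
  have c2pos : 0 < s ^ 2 / (4 * (d ^ 2 + 2 * s ^ 2) ^ 2) := by positivity
  have hSa : Tendsto (fun m : ℕ => ∑ i ∈ Icc (-(m : ℤ)) m, ∑ k ∈ Icc (-(m : ℤ)) m,
      Complex.normSq (steer d s ν i k)) atTop atTop :=
    tendsto_atTop_mono
      (fun m => grid_sum_ge m _ (fun i k => Complex.normSq_nonneg _) _ c1pos.le
        (fun i k hi hk0 hki => steer_bound hd hs hν i k hi hk0 hki))
      (harmonic_tendsto _ c1pos)
  have hSx : Tendsto (fun m : ℕ => ∑ i ∈ Icc (-(m : ℤ)) m, ∑ k ∈ Icc (-(m : ℤ)) m,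
      Complex.normSq (dax d s ν i k)) atTop atTop :=
    tendsto_atTop_mono
      (fun m => grid_sum_ge m _ (fun i k => Complex.normSq_nonneg _) _ c2pos.le
        (fun i k hi hk0 hki => dax_bound hd hs hν i k hi hk0 hki))
      (harmonic_tendsto _ c2pos)
  have hSy_eq : ∀ m : ℕ, (∑ i ∈ Icc (-(m : ℤ)) (m : ℤ), ∑ k ∈ Icc (-(m : ℤ)) (m : ℤ),
      Complex.normSq (day d s ν i k)) = ∑ i ∈ Icc (-(m : ℤ)) (m : ℤ),
        ∑ k ∈ Icc (-(m : ℤ)) (m : ℤ), Complex.normSq (dax d s ν i k) := by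
    intro m
    rw [Finset.sum_comm]
    exact Finset.sum_congr rfl fun i _ => Finset.sum_congr rfl fun k _ => by
      rw [day_swap]
  have hx : Tendsto (fun m : ℕ =>
      (σ ^ 2 / (4 * Complex.normSq b * (L : ℝ))) *
        (1 / ((∑ i ∈ Icc (-(m : ℤ)) m, ∑ k ∈ Icc (-(m : ℤ)) m,
                Complex.normSq (steer d s ν i k)) *
              (∑ i ∈ Icc (-(m : ℤ)) m, ∑ k ∈ Icc (-(m : ℤ)) m,
                Complex.normSq (dax d s ν i k)))))
      atTop (nhds 0) := by
    have hprod := hSa.atTop_mul_atTop₀ hSx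
    have hinv := hprod.inv_tendsto_atTop
    have hfin := hinv.const_mul (σ ^ 2 / (4 * Complex.normSq b * (L : ℝ)))
    rw [mul_zero] at hfin
    simpa [one_div, Function.comp] using hfin
  refine ⟨hx, ?_⟩
  have : (fun m : ℕ =>
      (σ ^ 2 / (4 * Complex.normSq b * (L : ℝ))) *
        (1 / ((∑ i ∈ Icc (-(m : ℤ)) m, ∑ k ∈ Icc (-(m : ℤ)) m,
                Complex.normSq (steer d s ν i k)) *
              (∑ i ∈ Icc (-(m : ℤ)) m, ∑ k ∈ Icc (-(m : ℤ)) m,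
                Complex.normSq (day d s ν i k))))) = (fun m : ℕ =>
      (σ ^ 2 / (4 * Complex.normSq b * (L : ℝ))) *
        (1 / ((∑ i ∈ Icc (-(m : ℤ)) m, ∑ k ∈ Icc (-(m : ℤ)) m,
                Complex.normSq (steer d s ν i k)) *
              (∑ i ∈ Icc (-(m : ℤ)) m, ∑ k ∈ Icc (-(m : ℤ)) m,
                Complex.normSq (dax d s ν i k))))) := by
    funext m
    rw [hSy_eq m]
  rw [this]
  exact hx
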